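/- arXiv:2604.11761 — 2 statements merged into one kernel-verified Lean document; each statement's English description precedes it below -/
import Mathlib

section
/- Let v ∈ ℝ^n, α > 0 and γ ∈ (0,1). For any w ∈ ℝ^n satisfying ‖v − w‖₂ < γ‖D(v)‖₂ / (5√n), one has CLCD_{α/2, γ/2}(w) ≥ min{ CLCD_{α,γ}(v), α / (4√n ‖v − w‖₂) }. -/
/-!
Let `t > 0` witness the condition defining `CLCD_{α/2,γ/2}(w)`. If `t ≥ α / (4√n ‖v − w‖₂)`
there is nothing to prove. Otherwise `t ‖D(v) − D(w)‖₂ ≤ t √n ‖v − w‖₂` is below `α/4`, and by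
the hypothesis also below `t γ ‖D(v)‖₂ / 5`; as the distance to the lattice is 1-Lipschitz, `t`
then witnesses the condition defining `CLCD_{α,γ}(v)`. The bound `‖D(u)‖₂ ≤ √n ‖u‖₂` comes from
`∑_{i<j} (u_i − u_j)² = n ∑ u_i² − (∑ u_i)²`.
-/

open Real

noncomputable section

/-- Euclidean norm of a finitely indexed real vector. -/
def pnorm {ι : Type*} [Fintype ι] (x : ι → ℝ) : ℝ := Real.sqrt (∑ i, x i ^ 2)

/-- Index type for the coordinates of `D(v)`: pairs `(i, j)` with `i < j`. -/
abbrev PairIdx (n : ℕ) := {p : Fin n × Fin n // p.1 < p.2}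

/-- `D(v)`: the vector in `ℝ^{n(n-1)/2}` whose `(i,j)`-coordinate is `v i - v j`
for `i < j`. -/
def Dvec {n : ℕ} (v : Fin n → ℝ) : PairIdx n → ℝ := fun p => v p.1.1 - v p.1.2

/-- Euclidean distance from a vector to the integer lattice. -/
def latDist {ι : Type*} [Fintype ι] (x : ι → ℝ) : ℝ :=
  ⨅ m : ι → ℤ, pnorm (fun i => x i - (m i : ℝ))

/-- The combinatorial least common denominator
`CLCD_{α,γ}(v) = inf {θ > 0 : dist(θ D(v), ℤ^{n(n-1)/2}) < min(γ ‖θ D(v)‖₂, α)}`,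
as an extended nonnegative real (`∞` if no such `θ` exists). -/
def CLCD (n : ℕ) (α γ : ℝ) (v : Fin n → ℝ) : ENNReal :=
  sInf {θ : ENNReal | ∃ t : ℝ, 0 < t ∧ θ = ENNReal.ofReal t ∧
    latDist (fun p => t * Dvec v p) < min (γ * pnorm (fun p => t * Dvec v p)) α}

section PiNorm

variable {ι : Type*} [Fintype ι]

lemma pnorm_eq_norm (x : ι → ℝ) : pnorm x = ‖WithLp.toLp 2 x‖ := by
  simp [pnorm, EuclideanSpace.norm_eq, sq_abs]

lemma pnorm_nonneg (x : ι → ℝ) : 0 ≤ pnorm x :=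
  Real.sqrt_nonneg _

lemma pnorm_sub_le (x y z : ι → ℝ) :
    pnorm (x - z) ≤ pnorm (x - y) + pnorm (y - z) := by
  simp only [pnorm_eq_norm, WithLp.toLp_sub]
  exact norm_sub_le_norm_sub_add_norm_sub _ _ _

lemma pnorm_sub_comm (x y : ι → ℝ) : pnorm (x - y) = pnorm (y - x) := by
  simp only [pnorm_eq_norm, WithLp.toLp_sub, norm_sub_rev]

lemma pnorm_smul (c : ℝ) (x : ι → ℝ) : pnorm (c • x) = |c| * pnorm x := by
  rw [pnorm_eq_norm, pnorm_eq_norm, WithLp.toLp_smul, norm_smul, Real.norm_eq_abs]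

lemma latDist_le_add_pnorm_sub (x y : ι → ℝ) :
    latDist x ≤ latDist y + pnorm (x - y) := by
  have hbdd : BddBelow (Set.range fun m : ι → ℤ => pnorm (fun i => x i - (m i : ℝ))) :=
    ⟨0, by rintro _ ⟨m, rfl⟩; exact pnorm_nonneg _⟩
  rw [← sub_le_iff_le_add]
  refine le_ciInf fun m => ?_
  have h1 : pnorm (fun i => x i - (m i : ℝ)) ≤ pnorm (x - y) + pnorm (fun i => y i - (m i : ℝ)) :=
    pnorm_sub_le x y _
  have h2 : latDist x ≤ pnorm (fun i => x i - (m i : ℝ)) := ciInf_le hbdd m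
  linarith

lemma latDist_lt_min_of_pnorm_sub_le {x y : ι → ℝ} {α γ : ℝ}
    (hγ : 0 ≤ γ) (hγ1 : γ ≤ 1) (hγx : pnorm (x - y) ≤ γ * pnorm x / 5)
    (hαx : pnorm (x - y) ≤ α / 2) (hy : latDist y < min (γ / 2 * pnorm y) (α / 2)) :
    latDist x < min (γ * pnorm x) α := by
  have hxy := latDist_le_add_pnorm_sub x y
  have hyx : pnorm y ≤ pnorm x + pnorm (x - y) := by
    simpa only [sub_zero, pnorm_sub_comm y x, add_comm] using pnorm_sub_le y x 0
  rw [lt_min_iff] at hy ⊢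
  have := mul_le_mul_of_nonneg_left hyx (by positivity : 0 ≤ γ / 2)
  constructor <;> nlinarith [pnorm_nonneg (x - y)]

end PiNorm

lemma Dvec_sub {n : ℕ} (v w : Fin n → ℝ) : Dvec (v - w) = Dvec v - Dvec w := by
  ext p; simp only [Dvec, Pi.sub_apply]; ring

lemma two_mul_sum_pairIdx_le {n : ℕ} (g : Fin n × Fin n → ℝ) (hg : ∀ q, 0 ≤ g q)
    (hsymm : ∀ q, g q.swap = g q) : 2 * ∑ p : PairIdx n, g p.1 ≤ ∑ q, g q := by
  let e : PairIdx n ⊕ PairIdx n ↪ Fin n × Fin n :=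
    ⟨Sum.elim (fun p => p.1) (fun p => p.1.swap), by
      rintro (⟨⟨a, b⟩, hp⟩ | ⟨⟨a, b⟩, hp⟩) (⟨⟨c, d⟩, hq⟩ | ⟨⟨c, d⟩, hq⟩) h <;>
        simp only [Sum.elim_inl, Sum.elim_inr, Prod.swap_prod_mk, Prod.mk.injEq] at h hp hq
      · simp [h.1, h.2]
      · exact absurd (h.1 ▸ h.2 ▸ hp) (lt_asymm hq)
      · exact absurd (h.1 ▸ h.2 ▸ hp) (lt_asymm hq)
      · simp [h.1, h.2]⟩
  calc 2 * ∑ p : PairIdx n, g p.1 = ∑ x, g (e x) := by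
        rw [Fintype.sum_sum_type, two_mul]
        exact congrArg₂ (· + ·) rfl (Finset.sum_congr rfl fun p _ => (hsymm p.1).symm)
    _ = ∑ q ∈ Finset.univ.map e, g q := (Finset.sum_map _ _ _).symm
    _ ≤ ∑ q, g q := Finset.sum_le_univ_sum_of_nonneg hg

lemma sum_sum_sub_sq {n : ℕ} (u : Fin n → ℝ) :
    ∑ i, ∑ j, (u i - u j) ^ 2 = 2 * (n * ∑ i, u i ^ 2 - (∑ i, u i) ^ 2) := by
  simp only [sub_sq, Finset.sum_add_distrib, Finset.sum_sub_distrib, Finset.sum_const,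
    Finset.card_univ, Fintype.card_fin, nsmul_eq_mul, ← Finset.mul_sum, ← Finset.sum_mul]
  ring

lemma pnorm_Dvec_le {n : ℕ} (u : Fin n → ℝ) : pnorm (Dvec u) ≤ Real.sqrt n * pnorm u := by
  have hsq : 2 * ∑ p, Dvec u p ^ 2 ≤ 2 * (n * ∑ i, u i ^ 2 - (∑ i, u i) ^ 2) := by
    rw [← sum_sum_sub_sq, ← Fintype.sum_prod_type']
    exact two_mul_sum_pairIdx_le (fun q => (u q.1 - u q.2) ^ 2) (fun _ => sq_nonneg _)
      (fun _ => by simp only [Prod.fst_swap, Prod.snd_swap]; ring)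
  rw [pnorm, pnorm, ← Real.sqrt_mul (Nat.cast_nonneg n)]
  exact Real.sqrt_le_sqrt (by nlinarith [sq_nonneg (∑ i, u i)])

lemma mul_lt_of_ofReal_lt_ofReal_div {t a b : ℝ} (ht : 0 ≤ t) (hb : 0 ≤ b)
    (h : ENNReal.ofReal t < ENNReal.ofReal a / ENNReal.ofReal b) : t * b < a := by
  rcases hb.eq_or_lt with rfl | hb
  · have : 0 < a := by
      by_contra! ha
      simp [ENNReal.ofReal_of_nonpos ha] at h
    simpa using this
  · rw [ENNReal.lt_div_iff_mul_lt (by simp [hb]) (by simp), ← ENNReal.ofReal_mul ht] at h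
    exact (ENNReal.ofReal_lt_ofReal_iff'.mp h).1

lemma le_CLCD {n : ℕ} {α γ : ℝ} {v : Fin n → ℝ} {c : ENNReal}
    (h : ∀ t : ℝ, 0 < t → latDist (t • Dvec v) < min (γ * pnorm (t • Dvec v)) α →
      c ≤ ENNReal.ofReal t) : c ≤ CLCD n α γ v :=
  le_sInf fun _ ⟨t, ht, hθ, hlt⟩ => hθ ▸ h t ht hlt

lemma CLCD_le {n : ℕ} {α γ t : ℝ} {v : Fin n → ℝ} (ht : 0 < t)
    (h : latDist (t • Dvec v) < min (γ * pnorm (t • Dvec v)) α) :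
    CLCD n α γ v ≤ ENNReal.ofReal t :=
  sInf_le ⟨t, ht, rfl, h⟩

/-- stability of the CLCD: for `v ∈ ℝ^n`, `α > 0`, `γ ∈ (0,1)` and any
`w ∈ ℝ^n` with `‖v − w‖₂ < γ‖D(v)‖₂/(5√n)`, one has
`CLCD_{α/2, γ/2}(w) ≥ min (CLCD_{α,γ}(v)) (α / (4√n ‖v − w‖₂))`. -/
theorem stmt10 {n : ℕ} (v w : Fin n → ℝ) (α γ : ℝ) (hα : 0 < α) (hγ : 0 < γ) (hγ1 : γ < 1)
    (hvw : pnorm (fun i => v i - w i) < γ * pnorm (Dvec v) / (5 * Real.sqrt n)) :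
    min (CLCD n α γ v)
        (ENNReal.ofReal α / ENNReal.ofReal (4 * Real.sqrt n * pnorm (fun i => v i - w i))) ≤
      CLCD n (α / 2) (γ / 2) w := by
  change pnorm (v - w) < _ at hvw
  change min _ (_ / ENNReal.ofReal (4 * Real.sqrt n * pnorm (v - w))) ≤ _
  set ε := pnorm (v - w)
  have hε : 0 ≤ ε := pnorm_nonneg _
  have hn : 0 < Real.sqrt n := by
    by_contra! h
    simp [le_antisymm h (Real.sqrt_nonneg _)] at hvw
    linarith
  have hD : pnorm (Dvec v - Dvec w) ≤ Real.sqrt n * ε := Dvec_sub v w ▸ pnorm_Dvec_le (v - w)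
  have hDγ : Real.sqrt n * ε < γ * pnorm (Dvec v) / 5 := by
    rw [lt_div_iff₀ (by positivity)] at hvw
    linarith
  refine le_CLCD fun t ht hw => ?_
  by_cases hlarge : ENNReal.ofReal α / ENNReal.ofReal (4 * Real.sqrt n * ε) ≤ ENNReal.ofReal t
  · exact (min_le_right _ _).trans hlarge
  have hsmall := mul_lt_of_ofReal_lt_ofReal_div ht.le (by positivity) (not_le.mp hlarge)
  refine (min_le_left _ _).trans (CLCD_le ht ?_)
  have htD : pnorm (t • Dvec v - t • Dvec w) ≤ t * (Real.sqrt n * ε) := by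
    rw [← smul_sub, pnorm_smul, abs_of_pos ht]
    exact mul_le_mul_of_nonneg_left hD ht.le
  refine latDist_lt_min_of_pnorm_sub_le hγ.le hγ1.le ?_ ?_ hw
  · rw [pnorm_smul, abs_of_pos ht]
    have := mul_lt_mul_of_pos_left hDγ ht
    linarith
  · linarith

end
end

section
/- Let δ, ρ ∈ (0,1), and fix a non-almost-constant unit vector v ∈ N(δ,ρ). Then for every α > 0 and every γ ∈ (0, δρ/12), one has CLCD_{α,γ}(v) ≥ (1/7)√(δn). -/
open Real

noncomputable section

/-- A vector `v` is almost-constant (with parameters `δ, ρ`) if some `λ ∈ ℝ` satisfies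
`|v i − λ| ≤ ρ/√n` for at least `(1−δ)n` coordinates `i`. -/
def almostConst {n : ℕ} (δ ρ : ℝ) (v : Fin n → ℝ) : Prop :=
  ∃ lam : ℝ, (1 - δ) * n ≤ (Nat.card {i : Fin n // |v i - lam| ≤ ρ / Real.sqrt n} : ℝ)

/-!
Let `θ > 0` and let `m` be an integer point with `‖θ D(v) - m‖ < γ ‖θ D(v)‖`. Since `v` is not
almost constant, every row `i` has more than `δ n` indices `j` with `|v i - v j| > ρ / √n`, so
more than `δ n² / 2` coordinates of `D(v)` are that large. At each of them either `m` is a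
nonzero integer, contributing `1` to `‖m‖²`, or `m` vanishes, contributing `θ² ρ² / n` to
`‖θ D(v) - m‖²`. Both norms are controlled by `‖θ D(v)‖² ≤ θ² n`, and `γ < δ ρ / 12` makes
the second one small; counting gives `δ n ≤ 49 θ²`.
-/

lemma sq_pnorm {ι : Type*} [Fintype ι] (x : ι → ℝ) : pnorm x ^ 2 = ∑ i, x i ^ 2 :=
  Real.sq_sqrt (Finset.sum_nonneg fun _ _ => sq_nonneg _)

lemma two_mul_sum_pairIdx {n : ℕ} (g : Fin n → Fin n → ℝ) (hsymm : ∀ i j, g i j = g j i)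
    (hdiag : ∀ i, g i i = 0) : 2 * ∑ p : PairIdx n, g p.1.1 p.1.2 = ∑ i, ∑ j, g i j := by
  have hsplit : ∀ q : Fin n × Fin n, g q.1 q.2 =
      (if q.1 < q.2 then g q.1 q.2 else 0) + (if q.2 < q.1 then g q.2 q.1 else 0) := by
    rintro ⟨i, j⟩
    rcases lt_trichotomy i j with h | rfl | h
    · simp [h, h.not_gt]
    · simp [hdiag]
    · simp [h, h.not_gt, hsymm i j]
  have hpair : ∑ p : PairIdx n, g p.1.1 p.1.2
      = ∑ q : Fin n × Fin n, if q.1 < q.2 then g q.1 q.2 else 0 := by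
    rw [← Finset.sum_filter]
    exact (Finset.sum_subtype _ (by simp) (fun q : Fin n × Fin n => g q.1 q.2)).symm
  have hswap : ∑ q : Fin n × Fin n, (if q.2 < q.1 then g q.2 q.1 else 0)
      = ∑ q : Fin n × Fin n, if q.1 < q.2 then g q.1 q.2 else 0 :=
    Fintype.sum_equiv (Equiv.prodComm _ _) _ _ (fun _ => rfl)
  rw [← Fintype.sum_prod_type', Finset.sum_congr rfl (fun q _ => hsplit q), Finset.sum_add_distrib,
    hswap, hpair]
  ring

lemma sum_sq_Dvec_le {n : ℕ} (v : Fin n → ℝ) : ∑ p, Dvec v p ^ 2 ≤ n * ∑ i, v i ^ 2 := by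
  have h := two_mul_sum_pairIdx (fun i j => (v i - v j) ^ 2) (fun _ _ => by ring)
    (fun _ => by ring)
  have hexp : ∑ i, ∑ j, (v i - v j) ^ 2 = 2 * n * ∑ i, v i ^ 2 - 2 * (∑ i, v i) ^ 2 := by
    have hpt : ∀ i j, (v i - v j) ^ 2 = v i ^ 2 + v j ^ 2 - 2 * (v i * v j) := fun i j => by ring
    simp only [hpt, Finset.sum_add_distrib, Finset.sum_sub_distrib, Finset.sum_const,
      Finset.card_univ, Fintype.card_fin, nsmul_eq_mul, ← Finset.mul_sum, ← Finset.sum_mul]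
    ring
  simp only [Dvec]
  nlinarith [sq_nonneg (∑ i, v i)]

lemma lt_card_far_of_not_almostConst {n : ℕ} {δ ρ : ℝ} {v : Fin n → ℝ}
    (hna : ¬ almostConst δ ρ v) (lam : ℝ) :
    δ * n < (Finset.univ.filter (fun j => ρ / Real.sqrt n < |v j - lam|)).card := by
  simp only [almostConst, not_exists, not_le] at hna
  have hnear := hna lam
  rw [Nat.card_eq_fintype_card, Fintype.card_subtype] at hnear
  have hsplit := Finset.card_filter_add_card_filter_not (s := Finset.univ)
    (p := fun j : Fin n => |v j - lam| ≤ ρ / Real.sqrt n)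
  simp only [not_le, Finset.card_univ, Fintype.card_fin] at hsplit
  have : ((Finset.univ.filter (fun j : Fin n => |v j - lam| ≤ ρ / Real.sqrt n)).card : ℝ)
      + (Finset.univ.filter (fun j : Fin n => ρ / Real.sqrt n < |v j - lam|)).card = n := by
    exact_mod_cast hsplit
  linarith

lemma pos_of_not_almostConst {n : ℕ} {δ ρ : ℝ} {v : Fin n → ℝ} (hna : ¬ almostConst δ ρ v) :
    0 < n := by
  rcases Nat.eq_zero_or_pos n with rfl | hn
  · simpa using lt_card_far_of_not_almostConst hna 0
  · exact hn

lemma lt_two_mul_card_far_pairs {n : ℕ} {δ ρ : ℝ} (hρ : 0 ≤ ρ) {v : Fin n → ℝ}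
    (hna : ¬ almostConst δ ρ v) :
    δ * n ^ 2 < 2 * (Finset.univ.filter (fun p => ρ / Real.sqrt n < |Dvec v p|)).card := by
  have hc : 0 ≤ ρ / Real.sqrt n := by positivity
  have h := two_mul_sum_pairIdx (fun i j => if ρ / Real.sqrt n < |v i - v j| then (1 : ℝ) else 0)
    (fun i j => by rw [abs_sub_comm]) (fun i => by simp [hc.not_gt])
  have hrows : ∀ i, δ * n < ∑ j, if ρ / Real.sqrt n < |v i - v j| then (1 : ℝ) else 0 := by
    intro i
    simpa [Finset.sum_boole, abs_sub_comm] using lt_card_far_of_not_almostConst hna (v i)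
  have hne : (Finset.univ : Finset (Fin n)).Nonempty :=
    Finset.univ_nonempty_iff.2 (Fin.pos_iff_nonempty.1 (pos_of_not_almostConst hna))
  have hsum := Finset.sum_lt_sum_of_nonempty hne (fun i _ => hrows i)
  have hcard : ((Finset.univ.filter (fun p => ρ / Real.sqrt n < |Dvec v p|)).card : ℝ)
      = ∑ p : PairIdx n, if ρ / Real.sqrt n < |v p.1.1 - v p.1.2| then (1 : ℝ) else 0 := by
    rw [Finset.natCast_card_filter]
    rfl
  simp only [Finset.sum_const, Finset.card_univ, Fintype.card_fin, nsmul_eq_mul] at hsum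
  rw [hcard, h]
  linarith

lemma card_mul_sq_le_of_sq_le {ι : Type*} [Fintype ι] (x : ι → ℝ) (m : ι → ℤ) (s : Finset ι)
    (c : ℝ) (hs : ∀ p ∈ s, c ^ 2 ≤ x p ^ 2) :
    s.card * c ^ 2 ≤ c ^ 2 * ∑ p, (m p : ℝ) ^ 2 + ∑ p, (x p - m p) ^ 2 := by
  have hpt : ∀ p ∈ s, c ^ 2 ≤ c ^ 2 * (m p : ℝ) ^ 2 + (x p - m p) ^ 2 := by
    intro p hp
    by_cases hm : m p = 0
    · simpa [hm] using hs p hp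
    · have h1 : (1 : ℝ) ≤ (m p : ℝ) ^ 2 :=
        (one_le_sq_iff_one_le_abs _).2 (by exact_mod_cast Int.one_le_abs hm)
      nlinarith [sq_nonneg c, sq_nonneg (x p - m p)]
  calc s.card * c ^ 2 = ∑ _p ∈ s, c ^ 2 := by rw [Finset.sum_const, nsmul_eq_mul]
    _ ≤ ∑ p ∈ s, (c ^ 2 * (m p : ℝ) ^ 2 + (x p - m p) ^ 2) := Finset.sum_le_sum hpt
    _ ≤ ∑ p, (c ^ 2 * (m p : ℝ) ^ 2 + (x p - m p) ^ 2) :=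
        Finset.sum_le_sum_of_subset_of_nonneg (Finset.subset_univ s) (fun _ _ _ => by positivity)
    _ = c ^ 2 * ∑ p, (m p : ℝ) ^ 2 + ∑ p, (x p - m p) ^ 2 := by
        rw [Finset.sum_add_distrib, Finset.mul_sum]

lemma sum_sq_le_two_mul_add {ι : Type*} [Fintype ι] (x y : ι → ℝ) :
    ∑ p, y p ^ 2 ≤ 2 * ∑ p, x p ^ 2 + 2 * ∑ p, (x p - y p) ^ 2 := by
  rw [Finset.mul_sum, Finset.mul_sum, ← Finset.sum_add_distrib]
  exact Finset.sum_le_sum fun p _ => by nlinarith [sq_nonneg (2 * x p - y p)]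

lemma card_far_pairs_mul_le {n : ℕ} (hn : 0 < n) {ρ : ℝ} (hρ : 0 ≤ ρ) (t : ℝ) (v : Fin n → ℝ)
    (m : PairIdx n → ℤ) :
    (Finset.univ.filter (fun p => ρ / Real.sqrt n < |Dvec v p|)).card * (t ^ 2 * ρ ^ 2)
      ≤ t ^ 2 * ρ ^ 2 * ∑ p, (m p : ℝ) ^ 2 + n * ∑ p, (t * Dvec v p - m p) ^ 2 := by
  set B := Finset.univ.filter (fun p => ρ / Real.sqrt n < |Dvec v p|)
  set M := ∑ p, (m p : ℝ) ^ 2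
  have hn' : (0 : ℝ) < n := by exact_mod_cast hn
  have hs : ∀ p ∈ B, (t * (ρ / Real.sqrt n)) ^ 2 ≤ (t * Dvec v p) ^ 2 := by
    intro p hp
    have hgap := (Finset.mem_filter.1 hp).2
    have hsq : (ρ / Real.sqrt n) ^ 2 ≤ Dvec v p ^ 2 := by
      simpa only [sq_abs] using pow_le_pow_left₀ (by positivity) hgap.le 2
    rw [mul_pow, mul_pow]
    gcongr
  have h := card_mul_sq_le_of_sq_le (fun p => t * Dvec v p) m _ _ hs
  rw [mul_pow, div_pow, Real.sq_sqrt hn'.le] at h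
  have hcancel : ρ ^ 2 / n * n = ρ ^ 2 := div_mul_cancel₀ _ hn'.ne'
  have h' := mul_le_mul_of_nonneg_right h hn'.le
  linear_combination h' + (t ^ 2 * M - B.card * t ^ 2) * hcancel

lemma mul_le_of_sum_sq_sub_int_lt {n : ℕ} {δ ρ γ : ℝ} (hδ : 0 < δ) (hδ1 : δ < 1) (hρ : 0 < ρ)
    (hρ1 : ρ < 1) {v : Fin n → ℝ} (hv : ∑ i, v i ^ 2 = 1) (hna : ¬ almostConst δ ρ v)
    (hγ : 0 < γ) (hγ1 : γ < δ * ρ / 12) {t : ℝ} (ht : 0 < t) (m : PairIdx n → ℤ)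
    (hm : ∑ p, (t * Dvec v p - m p) ^ 2 < γ ^ 2 * ∑ p, (t * Dvec v p) ^ 2) :
    δ * n ≤ 49 * t ^ 2 := by
  set x : PairIdx n → ℝ := fun p => t * Dvec v p
  set N := ∑ p, x p ^ 2
  set E := ∑ p, (x p - m p) ^ 2
  set M := ∑ p, (m p : ℝ) ^ 2
  set B := Finset.univ.filter (fun p => ρ / Real.sqrt n < |Dvec v p|)
  set K := t ^ 2 * ρ ^ 2
  have hn : (0 : ℝ) < n := by exact_mod_cast pos_of_not_almostConst hna
  have hK : 0 < K := by positivity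
  have hN : N ≤ t ^ 2 * n := by
    have hx : N = t ^ 2 * ∑ p, Dvec v p ^ 2 := by simp only [N, x, mul_pow, Finset.mul_sum]
    rw [hx]
    gcongr
    simpa only [hv, mul_one] using sum_sq_Dvec_le v
  have hM : M ≤ 2 * N + 2 * E := sum_sq_le_two_mul_add x _
  have hB := lt_two_mul_card_far_pairs hρ.le hna
  have hBK : B.card * K ≤ K * M + n * E :=
    card_far_pairs_mul_le (pos_of_not_almostConst hna) hρ.le t v m
  have hchain : δ * n * ρ ^ 2 / 2 * (t ^ 2 * n)
      < (K * (2 + 2 * γ ^ 2) + n * γ ^ 2) * (t ^ 2 * n) :=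
    calc δ * n * ρ ^ 2 / 2 * (t ^ 2 * n) = δ * n ^ 2 * K / 2 := by ring
      _ < B.card * K := by nlinarith
      _ ≤ K * M + n * E := hBK
      _ ≤ K * (2 * N + 2 * E) + n * E := by gcongr
      _ ≤ K * (2 * N + 2 * (γ ^ 2 * N)) + n * (γ ^ 2 * N) := by gcongr
      _ = (K * (2 + 2 * γ ^ 2) + n * γ ^ 2) * N := by ring
      _ ≤ (K * (2 + 2 * γ ^ 2) + n * γ ^ 2) * (t ^ 2 * n) := by gcongr
  have hmain := lt_of_mul_lt_mul_right hchain (by positivity)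
  have hγsq : γ ^ 2 ≤ δ * ρ ^ 2 / 144 := by
    have hγ2 : γ ^ 2 < (δ * ρ / 12) ^ 2 := pow_lt_pow_left₀ hγ1 hγ.le two_ne_zero
    have hδ2 : δ ^ 2 ≤ δ := by nlinarith
    nlinarith [mul_le_mul_of_nonneg_right hδ2 (sq_nonneg ρ)]
  have hγsq' : γ ^ 2 ≤ 1 / 144 := by nlinarith
  -- with both bounds on `γ ^ 2`, `hmain` becomes `71 δ n ρ² < 290 t² ρ²`
  have h71 : (δ * n * 71) * ρ ^ 2 < (290 * t ^ 2) * ρ ^ 2 := by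
    nlinarith [mul_le_mul_of_nonneg_left hγsq hn.le, mul_le_mul_of_nonneg_left hγsq' hK.le]
  nlinarith [lt_of_mul_lt_mul_right h71 (sq_nonneg ρ)]

theorem stmt11_general {n : ℕ} (δ ρ : ℝ) (hδ : 0 < δ) (hδ1 : δ < 1) (hρ : 0 < ρ) (hρ1 : ρ < 1)
    (v : Fin n → ℝ) (hv : pnorm v = 1) (hna : ¬ almostConst δ ρ v)
    (α γ : ℝ) (hγ : 0 < γ) (hγ1 : γ < δ * ρ / 12) :
    ENNReal.ofReal (1 / 7 * Real.sqrt (δ * n)) ≤ CLCD n α γ v := by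
  have hv2 : ∑ i, v i ^ 2 = 1 := by rw [← sq_pnorm, hv, one_pow]
  refine le_sInf ?_
  rintro _ ⟨t, ht, rfl, hlat⟩
  obtain ⟨m, hm⟩ := exists_lt_of_ciInf_lt (lt_of_lt_of_le hlat (min_le_left _ _))
  have hsq := pow_lt_pow_left₀ hm (Real.sqrt_nonneg _) two_ne_zero
  rw [mul_pow, sq_pnorm, sq_pnorm] at hsq
  have hδn := mul_le_of_sum_sq_sub_int_lt hδ hδ1 hρ hρ1 hv2 hna hγ hγ1 ht m hsq
  rw [ENNReal.ofReal_le_ofReal_iff ht.le]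
  have : Real.sqrt (δ * n) ≤ 7 * t := (Real.sqrt_le_left (by positivity)).2 (by linarith)
  linarith

/-- for `δ, ρ ∈ (0,1)`, any non-almost-constant unit vector `v`, any
`α > 0` and any `γ ∈ (0, δρ/12)`, one has `CLCD_{α,γ}(v) ≥ (1/7)√(δn)`. -/
theorem stmt11 {n : ℕ} (δ ρ : ℝ) (hδ : 0 < δ) (hδ1 : δ < 1) (hρ : 0 < ρ) (hρ1 : ρ < 1)
    (v : Fin n → ℝ) (hv : pnorm v = 1) (hna : ¬ almostConst δ ρ v)
    (α γ : ℝ) (hα : 0 < α) (hγ : 0 < γ) (hγ1 : γ < δ * ρ / 12) :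
    ENNReal.ofReal (1 / 7 * Real.sqrt (δ * n)) ≤ CLCD n α γ v :=
  stmt11_general δ ρ hδ hδ1 hρ hρ1 v hv hna α γ hγ hγ1

end
end
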